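/- arXiv:math/0311243 — 8 statements merged into one kernel-verified Lean document; each statement's English description precedes it below -/
import Mathlib

section
/- Let ψ : (𝔽_q, +) → ℂˣ be a nontrivial additive character, and define χ_ψ : N → ℂˣ by χ_ψ(1+aε, bε; cε, 1−aε) = ψ(c). Then the stabilizer {g ∈ SL₂(𝔽_q) : χ_ψ(i(g)⁻¹ n i(g)) = χ_ψ(n) for all n ∈ N} equals the set of matrices (x, y; 0, x⁻¹) with x ∈ {1, −1} and y ∈ 𝔽_q; in particular this stabilizer is an abelian group of order 2q. -/
open Matrix TrivSqZeroExt

/-- The reduction homomorphism `SL₂(𝔽_q[X]/(X²)) → SL₂(𝔽_q)` induced by `ε ↦ 0`. -/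
noncomputable def rho (F : Type) [Field F] :
    Matrix.SpecialLinearGroup (Fin 2) (DualNumber F) →* Matrix.SpecialLinearGroup (Fin 2) F :=
  Matrix.SpecialLinearGroup.map (TrivSqZeroExt.fstHom F F F).toRingHom

/-- The homomorphism `SL₂(𝔽_q) → SL₂(𝔽_q[X]/(X²))` induced by the ring inclusion. -/
noncomputable def iota (F : Type) [Field F] :
    Matrix.SpecialLinearGroup (Fin 2) F →* Matrix.SpecialLinearGroup (Fin 2) (DualNumber F) :=
  Matrix.SpecialLinearGroup.map (TrivSqZeroExt.inlHom F F)

/-!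
Every element of `N` is `1 + εX` with `X` traceless, and `i(g)⁻¹ (1 + εX) i(g) = 1 + ε g⁻¹Xg`.
For `g = (a, b; c, d)` the lower-left entry of `g⁻¹Xg` is `a²X₁₀ - c²X₀₁ + ac(X₁₁ - X₀₀)`.
Testing `X = (0, z; 0, 0)` and `X = (0, 0; z, 0)` against `ψ`, which is primitive since
`𝔽_q` is a field, forces `c² = 0` and `a² = 1`; conversely these two conditions make the
entry equal to `X₁₀`. The resulting group `±U` (with `U` upper unitriangular) is abelian,
and it has `2q` elements because `1 ≠ -1` in odd characteristic.
-/

open scoped MatrixGroups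

lemma AddChar.eq_of_forall_apply_mul_eq {F M : Type*} [Field F] [CommMonoid M]
    {ψ : AddChar F M} (hψ : ψ ≠ 1) {a b : F} (h : ∀ z, ψ (a * z) = ψ (b * z)) : a = b :=
  AddChar.to_mulShift_inj_of_isPrimitive (.of_ne_one hψ) (DFunLike.ext _ _ h)

lemma Matrix.map_snd_map_inl_mul_mul_map_inl {n R : Type*} [Fintype n] [CommRing R]
    (A B : Matrix n n R) (M : Matrix n n (DualNumber R)) :
    (A.map inl * M * B.map inl).map snd = A * M.map snd * B := by
  ext i j
  simp [Matrix.mul_apply, snd_sum, Finset.sum_mul]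

lemma Matrix.SpecialLinearGroup.inv_mul_mul_apply_one_zero {R : Type*} [CommRing R]
    (g : SL(2, R)) (X : Matrix (Fin 2) (Fin 2) R) :
    (((g⁻¹ : SL(2, R)) : Matrix (Fin 2) (Fin 2) R) * X * g) 1 0
      = g 0 0 ^ 2 * X 1 0 - g 1 0 ^ 2 * X 0 1 + g 0 0 * g 1 0 * (X 1 1 - X 0 0) := by
  rw [SpecialLinearGroup.SL2_inv_expl, Matrix.mul_apply, Fin.sum_univ_two, Matrix.mul_apply,
    Matrix.mul_apply, Fin.sum_univ_two, Fin.sum_univ_two]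
  simp only [Fin.isValue, cons_val', cons_val_zero, cons_val_fin_one, cons_val_one, neg_mul]
  ring

lemma inv_eq_self_of_eq_one_or_eq_neg_one {G : Type*} [DivisionMonoid G] [HasDistribNeg G]
    {x : G} (hx : x = 1 ∨ x = -1) : x⁻¹ = x := by
  rcases hx with rfl | rfl <;> simp

section PlusMinusUnipotent

variable {F : Type*} [Field F]

variable (F) in
def plusMinusUnipotent : Set SL(2, F) :=
  {g | ∃ x y : F, (x = 1 ∨ x = -1) ∧ g.val = !![x, y; 0, x⁻¹]}

lemma mem_plusMinusUnipotent_iff {g : SL(2, F)} :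
    g ∈ plusMinusUnipotent F ↔ g 1 0 = 0 ∧ g 0 0 ^ 2 = 1 := by
  constructor
  · rintro ⟨x, y, hx, hg⟩
    rcases hx with rfl | rfl <;> simp [hg]
  · rintro ⟨h10, h00⟩
    have h11 : g 1 1 = (g 0 0)⁻¹ := by
      have hdet := g.det_coe
      rw [Matrix.det_fin_two, h10, mul_zero, sub_zero] at hdet
      exact (inv_eq_of_mul_eq_one_right hdet).symm
    refine ⟨g 0 0, g 0 1, sq_eq_one_iff.mp h00, ?_⟩
    ext i j
    fin_cases i <;> fin_cases j <;> simp [h10, h11]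

lemma plusMinusUnipotent_mul_comm {g h : SL(2, F)} (hg : g ∈ plusMinusUnipotent F)
    (hh : h ∈ plusMinusUnipotent F) : g * h = h * g := by
  obtain ⟨x, y, hx, hg⟩ := hg
  obtain ⟨x', y', hx', hh⟩ := hh
  apply Subtype.ext
  change g.val * h.val = h.val * g.val
  rw [hg, hh, inv_eq_self_of_eq_one_or_eq_neg_one hx, inv_eq_self_of_eq_one_or_eq_neg_one hx',
    Matrix.mul_fin_two, Matrix.mul_fin_two]
  ring_nf

theorem card_plusMinusUnipotent [Fintype F] (hF : ringChar F ≠ 2) :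
    Nat.card (plusMinusUnipotent F) = 2 * Fintype.card F := by
  let f : SL(2, F) → F × F := fun g => (g 0 0, g 0 1)
  have hinj : Set.InjOn f (plusMinusUnipotent F) := by
    rintro g ⟨x, y, -, hg⟩ h ⟨x', y', -, hh⟩ hgh
    obtain ⟨rfl, rfl⟩ : x = x' ∧ y = y' := by simpa [f, hg, hh] using hgh
    exact Subtype.ext (hg.trans hh.symm)
  have himage : f '' plusMinusUnipotent F = {1, -1} ×ˢ Set.univ := by
    ext ⟨x, y⟩
    constructor
    · rintro ⟨g, ⟨x', y', hx', hg⟩, hgxy⟩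
      simp_all [f]
    · rintro ⟨hx, -⟩
      have hx0 : x ≠ 0 := by rcases hx with rfl | rfl <;> simp
      exact ⟨⟨!![x, y; 0, x⁻¹], by simp [Matrix.det_fin_two, hx0]⟩, ⟨x, y, hx, rfl⟩, rfl⟩
  rw [← Nat.card_image_of_injOn hinj, himage, Nat.card_congr (Equiv.Set.prod _ _), Nat.card_prod,
    Nat.card_coe_set_eq, Set.ncard_pair (Ring.neg_one_ne_one_of_char_ne_two hF).symm,
    Nat.card_univ, Nat.card_eq_fintype_card]

end PlusMinusUnipotent

section KernelOfReduction

variable {R : Type*} [CommRing R]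

noncomputable def oneAddEpsilon (X : Matrix (Fin 2) (Fin 2) R) (hX : X.trace = 0) :
    SL(2, DualNumber R) :=
  ⟨1 + X.map inr, by
    rw [Matrix.det_fin_two]
    ext
    · simp
    · simpa [Matrix.trace_fin_two, add_comm] using hX⟩

@[simp]
lemma snd_oneAddEpsilon_apply (X : Matrix (Fin 2) (Fin 2) R) (hX : X.trace = 0) (i j : Fin 2) :
    snd ((oneAddEpsilon X hX : Matrix (Fin 2) (Fin 2) (DualNumber R)) i j) = X i j := by
  simp [oneAddEpsilon, Matrix.one_apply, apply_ite]

end KernelOfReduction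

section Stabilizer

variable {F : Type} [Field F] {M : Type*} [CommMonoid M]

lemma oneAddEpsilon_mem_ker_rho (X : Matrix (Fin 2) (Fin 2) F) (hX : X.trace = 0) :
    oneAddEpsilon X hX ∈ (rho F).ker := by
  ext i j
  change fst ((1 + X.map inr : Matrix (Fin 2) (Fin 2) (DualNumber F)) i j)
    = (1 : Matrix (Fin 2) (Fin 2) F) i j
  simp [Matrix.one_apply, apply_ite]

lemma map_snd_iota_inv_mul_mul_iota (g : SL(2, F)) (m : SL(2, DualNumber F)) :
    (((iota F g)⁻¹ * m * iota F g : SL(2, DualNumber F)) :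
        Matrix (Fin 2) (Fin 2) (DualNumber F)).map snd
      = ((g⁻¹ : SL(2, F)) : Matrix (Fin 2) (Fin 2) F)
        * (m : Matrix (Fin 2) (Fin 2) (DualNumber F)).map snd * (g : Matrix (Fin 2) (Fin 2) F) := by
  rw [← map_inv]
  exact Matrix.map_snd_map_inl_mul_mul_map_inl _ _ _

def charStabilizer (ψ : AddChar F M) : Set SL(2, F) :=
  {g | ∀ m ∈ (rho F).ker,
    ψ ((((iota F g)⁻¹ * m * iota F g).val 1 0).snd) = ψ ((m.val 1 0).snd)}

lemma mem_charStabilizer_iff {ψ : AddChar F M} {g : SL(2, F)} :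
    g ∈ charStabilizer ψ ↔ ∀ m ∈ (rho F).ker,
      ψ ((((g⁻¹ : SL(2, F)) : Matrix (Fin 2) (Fin 2) F)
        * (m : Matrix (Fin 2) (Fin 2) (DualNumber F)).map snd * g) 1 0) = ψ ((m.val 1 0).snd) := by
  simp only [charStabilizer, ← map_snd_iota_inv_mul_mul_iota]
  rfl

theorem charStabilizer_eq_plusMinusUnipotent {ψ : AddChar F M} (hψ : ψ ≠ 1) :
    charStabilizer ψ = plusMinusUnipotent F := by
  ext g
  rw [mem_charStabilizer_iff, mem_plusMinusUnipotent_iff]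
  simp only [SpecialLinearGroup.inv_mul_mul_apply_one_zero]
  constructor
  · intro hg
    have hX : ∀ X : Matrix (Fin 2) (Fin 2) F, X.trace = 0 →
        ψ (g 0 0 ^ 2 * X 1 0 - g 1 0 ^ 2 * X 0 1 + g 0 0 * g 1 0 * (X 1 1 - X 0 0)) = ψ (X 1 0) :=
      fun X hX => by simpa using hg _ (oneAddEpsilon_mem_ker_rho X hX)
    have h10 : -g 1 0 ^ 2 = 0 := AddChar.eq_of_forall_apply_mul_eq hψ fun z => by
      simpa using hX !![0, z; 0, 0] (by simp [Matrix.trace_fin_two])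
    have h00 : g 0 0 ^ 2 = 1 := AddChar.eq_of_forall_apply_mul_eq hψ fun z => by
      simpa using hX !![0, 0; z, 0] (by simp [Matrix.trace_fin_two])
    exact ⟨by simpa using h10, h00⟩
  · rintro ⟨h10, h00⟩ m -
    simp [h10, h00]

end Stabilizer

theorem stmt3_general (F : Type) [Field F] [Fintype F] (p n : ℕ) (hp : p.Prime) (hodd : p ≠ 2)
    (hcard : Fintype.card F = p ^ n)
    (ψ : AddChar F ℂˣ) (hψ : ψ ≠ 1)
    -- `S` is the stabilizer of `χ_ψ` in `SL₂(𝔽_q)`, where for `m ∈ N = ker ρ`,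
    -- `χ_ψ(m) = ψ(c)` with `c` the `ε`-coefficient of the lower-left entry of `m`
    (S : Set (Matrix.SpecialLinearGroup (Fin 2) F))
    (hS : S = {g | ∀ m ∈ (rho F).ker,
        ψ ((((iota F g)⁻¹ * m * iota F g).val 1 0).snd) = ψ ((m.val 1 0).snd)}) :
    S = {g | ∃ x y : F, (x = 1 ∨ x = -1) ∧ g.val = !![x, y; 0, x⁻¹]} ∧
    (∀ g ∈ S, ∀ h ∈ S, g * h = h * g) ∧
    Nat.card S = 2 * Fintype.card F := by
  have hF : ringChar F ≠ 2 := by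
    rw [Ne, FiniteField.even_card_iff_char_two, hcard, Nat.odd_iff.mp (hp.odd_of_ne_two hodd).pow]
    exact one_ne_zero
  obtain rfl : S = plusMinusUnipotent F := hS.trans (charStabilizer_eq_plusMinusUnipotent hψ)
  exact ⟨rfl, fun g hg h hh => plusMinusUnipotent_mul_comm hg hh, card_plusMinusUnipotent hF⟩

theorem stmt3 (F : Type) [Field F] [Fintype F] (p n : ℕ) (hp : p.Prime) (hodd : p ≠ 2)
    (hn : n ≠ 0) (hcard : Fintype.card F = p ^ n)
    (ψ : AddChar F ℂˣ) (hψ : ψ ≠ 1)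
    -- `S` is the stabilizer of `χ_ψ` in `SL₂(𝔽_q)`, where for `m ∈ N = ker ρ`,
    -- `χ_ψ(m) = ψ(c)` with `c` the `ε`-coefficient of the lower-left entry of `m`
    (S : Set (Matrix.SpecialLinearGroup (Fin 2) F))
    (hS : S = {g | ∀ m ∈ (rho F).ker,
        ψ ((((iota F g)⁻¹ * m * iota F g).val 1 0).snd) = ψ ((m.val 1 0).snd)}) :
    S = {g | ∃ x y : F, (x = 1 ∨ x = -1) ∧ g.val = !![x, y; 0, x⁻¹]} ∧
    (∀ g ∈ S, ∀ h ∈ S, g * h = h * g) ∧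
    Nat.card S = 2 * Fintype.card F :=
  stmt3_general F p n hp hodd hcard ψ hψ S hS
end

section
/- Let ψ : (𝔽_q, +) → ℂˣ be a nontrivial additive character, and for k ∈ 𝔽_qˣ define χ_k : N → ℂˣ by χ_k(1+aε, bε; cε, 1−aε) = ψ(kc). Then for k, m ∈ 𝔽_qˣ, there exists g ∈ SL₂(𝔽_q) with χ_m(n) = χ_k(i(g)⁻¹ n i(g)) for all n ∈ N if and only if there exists x ∈ 𝔽_qˣ with kx² = m. -/
/-!
Conjugating `w ∈ N` by `i(g)` acts on the lower-left `ε`-coefficient `c` of `w` by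
`c ↦ α² c - γ² b + α γ (d - a)`, where `(α, γ)` is the first column of `g` and `aε, bε, dε` are the
other `ε`-coefficients of `w`. Testing on the lower unipotent elements `(1, 0; cε, 1)` forces
`ψ(m c) = ψ(k α² c)` for all `c`, hence `m = k α²` because a nontrivial character of a field is
primitive. Conversely, if `m = k x²` then `g = diag(x, x⁻¹)` has `γ = 0` and scales `c` by `x²`.
-/

open Matrix TrivSqZeroExt

namespace Matrix.SpecialLinearGroup

variable {R : Type*} [CommRing R]

theorem coe_inv_mul_mul_apply_one_zero (g A : SpecialLinearGroup (Fin 2) R) :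
    ((g⁻¹ * A * g : SpecialLinearGroup (Fin 2) R) : Matrix (Fin 2) (Fin 2) R) 1 0 =
      g 0 0 ^ 2 * A 1 0 - g 1 0 ^ 2 * A 0 1 + g 0 0 * g 1 0 * (A 1 1 - A 0 0) := by
  simp [coe_inv, adjugate_fin_two, mul_apply, vecMul, dotProduct, Fin.sum_univ_two]
  ring

def lowerUnipotent (r : R) : SpecialLinearGroup (Fin 2) R :=
  ⟨!![1, 0; r, 1], by simp [det_fin_two_of]⟩

end Matrix.SpecialLinearGroup

open Matrix.SpecialLinearGroup

section DualNumber

variable {F : Type} [Field F]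

theorem iota_apply (g : SpecialLinearGroup (Fin 2) F) (i j : Fin 2) :
    (iota F g : Matrix (Fin 2) (Fin 2) (DualNumber F)) i j = inl (g i j) := rfl

theorem lowerUnipotent_inr_mem_ker_rho (c : F) : lowerUnipotent (inr c) ∈ (rho F).ker := by
  rw [MonoidHom.mem_ker]
  ext i j
  fin_cases i <;> fin_cases j <;> rfl

theorem snd_iota_conj_apply_one_zero (g : SpecialLinearGroup (Fin 2) F)
    (w : SpecialLinearGroup (Fin 2) (DualNumber F)) :
    (((iota F g)⁻¹ * w * iota F g).val 1 0).snd =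
      g.val 0 0 ^ 2 * (w.val 1 0).snd - g.val 1 0 ^ 2 * (w.val 0 1).snd +
        g.val 0 0 * g.val 1 0 * ((w.val 1 1).snd - (w.val 0 0).snd) := by
  rw [coe_inv_mul_mul_apply_one_zero]
  simp [iota_apply, snd_mul]

end DualNumber

theorem stmt4_general (F : Type) [Field F]
    (ψ : AddChar F ℂˣ) (hψ : ψ ≠ 1)
    (k m : F) (hm : m ≠ 0) :
    -- `χ_k` sends an element `w` of `N = ker ρ` to `ψ(k·c)`, where `c` is the
    -- `ε`-coefficient of the lower-left entry of `w`
    (∃ g : Matrix.SpecialLinearGroup (Fin 2) F, ∀ w ∈ (rho F).ker,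
        ψ (m * (w.val 1 0).snd) =
          ψ (k * (((iota F g)⁻¹ * w * iota F g).val 1 0).snd)) ↔
      ∃ x : F, x ≠ 0 ∧ k * x ^ 2 = m := by
  constructor
  · rintro ⟨g, hg⟩
    have hshift : ψ.mulShift m = ψ.mulShift (k * g 0 0 ^ 2) := by
      refine DFunLike.ext _ _ fun c => ?_
      have hc := hg _ (lowerUnipotent_inr_mem_ker_rho c)
      rw [snd_iota_conj_apply_one_zero] at hc
      simpa [lowerUnipotent, mul_assoc] using hc
    have hkm := AddChar.to_mulShift_inj_of_isPrimitive (.of_ne_one hψ) hshift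
    refine ⟨g 0 0, fun h0 => hm ?_, hkm.symm⟩
    simpa [h0] using hkm
  · rintro ⟨x, hx, rfl⟩
    let g : SpecialLinearGroup (Fin 2) F := ⟨!![x, 0; 0, x⁻¹], by simp [det_fin_two_of, hx]⟩
    refine ⟨g, fun w _ => ?_⟩
    rw [snd_iota_conj_apply_one_zero]
    simp [g, mul_assoc]

theorem stmt4 (F : Type) [Field F] [Fintype F] (p n : ℕ) (hp : p.Prime) (hodd : p ≠ 2)
    (hn : n ≠ 0) (hcard : Fintype.card F = p ^ n)
    (ψ : AddChar F ℂˣ) (hψ : ψ ≠ 1)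
    (k m : F) (hk : k ≠ 0) (hm : m ≠ 0) :
    -- `χ_k` sends an element `w` of `N = ker ρ` to `ψ(k·c)`, where `c` is the
    -- `ε`-coefficient of the lower-left entry of `w`
    (∃ g : Matrix.SpecialLinearGroup (Fin 2) F, ∀ w ∈ (rho F).ker,
        ψ (m * (w.val 1 0).snd) =
          ψ (k * (((iota F g)⁻¹ * w * iota F g).val 1 0).snd)) ↔
      ∃ x : F, x ≠ 0 ∧ k * x ^ 2 = m :=
  stmt4_general F ψ hψ k m hm
end

section
/- Let G be a group, F : G → G a group homomorphism, U a subgroup of G with F(U) ⊆ U, and x ∈ G. Define L : G → G by L(g) = g⁻¹F(g), and let G^F = {g ∈ G : F(g) = g}. Then L⁻¹(xU) is stable under right multiplication by the subgroup U ∩ xUx⁻¹, and the map sending the right coset g(U ∩ xUx⁻¹) to the right coset gU is a well-defined bijection from the set of (U ∩ xUx⁻¹)-orbits of L⁻¹(xU) onto the set of U-orbits of L⁻¹(UxU); moreover this bijection commutes with the actions of G^F by left multiplication on both sides. -/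
theorem stmt8 (G : Type*) [Group G] (F : G →* G) (U : Subgroup G)
    (hU : ∀ u ∈ U, F u ∈ U) (x : G)
    -- `V = U ∩ xUx⁻¹`
    (V : Set G) (hV : V = {v : G | v ∈ U ∧ ∃ u ∈ U, v = x * u * x⁻¹})
    -- `A = L⁻¹(xU)`
    (A : Set G) (hA : A = {g : G | ∃ u ∈ U, g⁻¹ * F g = x * u})
    -- `B = L⁻¹(UxU)`
    (B : Set G) (hB : B = {g : G | ∃ u ∈ U, ∃ u' ∈ U, g⁻¹ * F g = u * x * u'}) :
    -- `L⁻¹(xU)` is stable under right multiplication by `U ∩ xUx⁻¹`,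
    -- and `L⁻¹(UxU)` is stable under right multiplication by `U`
    (∀ g ∈ A, ∀ v ∈ V, g * v ∈ A) ∧
    (∀ g ∈ B, ∀ u ∈ U, g * u ∈ B) ∧
    -- the map on orbits is induced by the inclusion `L⁻¹(xU) ↪ L⁻¹(UxU)`
    A ⊆ B ∧
    -- well-definedness and injectivity: two elements of `L⁻¹(xU)` have the same
    -- image `gU` iff they lie in the same `(U ∩ xUx⁻¹)`-orbit
    (∀ g ∈ A, ∀ g' ∈ A, ((∃ u ∈ U, g' = g * u) ↔ (∃ v ∈ V, g' = g * v))) ∧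
    -- surjectivity: every `U`-orbit of `L⁻¹(UxU)` is the image of some `g ∈ L⁻¹(xU)`
    (∀ h ∈ B, ∃ g ∈ A, ∃ u ∈ U, h = g * u) ∧
    -- both sides carry the action of `G^F` by left multiplication (with which the
    -- orbit map `g(U ∩ xUx⁻¹) ↦ gU` evidently commutes)
    (∀ γ : G, F γ = γ → ∀ g ∈ A, γ * g ∈ A) ∧
    (∀ γ : G, F γ = γ → ∀ g ∈ B, γ * g ∈ B) := by
  subst hV hA hB
  refine ⟨?_, ?_, ?_, ?_, ?_, ?_, ?_⟩
  · rintro g ⟨u, hu, hg⟩ v ⟨hvU, u₁, hu₁, rfl⟩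
    refine ⟨u₁⁻¹ * u * F (x * u₁ * x⁻¹), mul_mem (mul_mem (inv_mem hu₁) hu)
      (hU _ hvU), ?_⟩
    have key : ∀ v : G, (g * v)⁻¹ * F (g * v) = v⁻¹ * (g⁻¹ * F g) * F v := by
      intro v; rw [map_mul]; group
    rw [key, hg]; group
  · rintro g ⟨u, hu, u', hu', hg⟩ w hw
    refine ⟨w⁻¹ * u, mul_mem (inv_mem hw) hu, u' * F w, mul_mem hu' (hU _ hw), ?_⟩
    simp only [mul_inv_rev, map_mul]
    rw [show w⁻¹ * g⁻¹ * (F g * F w) = w⁻¹ * (g⁻¹ * F g) * F w by group, hg]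
    group
  · rintro g ⟨u, hu, hg⟩
    exact ⟨1, one_mem U, u, hu, by rw [hg]; group⟩
  · rintro g ⟨u₀, hu₀, hg⟩ g' ⟨u₁, hu₁, hg'⟩
    constructor
    · rintro ⟨u, hu, rfl⟩
      refine ⟨u, ⟨hu, u₀ * F u * u₁⁻¹, mul_mem (mul_mem hu₀ (hU _ hu)) (inv_mem hu₁), ?_⟩, rfl⟩
      have h2 : u⁻¹ * (g⁻¹ * F g) * F u = x * u₁ := by
        rw [← hg']; simp only [mul_inv_rev, map_mul]; group
      rw [hg] at h2
      have h3 : x * u₀ * F u = u * (x * u₁) := by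
        calc x * u₀ * F u = u * (u⁻¹ * (x * u₀) * F u) := by group
          _ = u * (x * u₁) := by rw [h2]
      rw [show x * (u₀ * F u * u₁⁻¹) * x⁻¹ = (x * u₀ * F u) * u₁⁻¹ * x⁻¹ by group, h3]
      group
    · rintro ⟨v, ⟨hv, _⟩, rfl⟩
      exact ⟨v, hv, rfl⟩
  · rintro h ⟨u, hu, u', hu', hh⟩
    refine ⟨h * u, ⟨u' * F u, mul_mem hu' (hU _ hu), ?_⟩, u⁻¹, inv_mem hu, by group⟩
    simp only [mul_inv_rev, map_mul]
    rw [show u⁻¹ * h⁻¹ * (F h * F u) = u⁻¹ * (h⁻¹ * F h) * F u by group, hh]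
    group
  · rintro γ hγ g ⟨u, hu, hg⟩
    refine ⟨u, hu, ?_⟩
    simp only [mul_inv_rev, map_mul, hγ]
    rw [show g⁻¹ * γ⁻¹ * (γ * F g) = g⁻¹ * F g by group, hg]
  · rintro γ hγ g ⟨u, hu, u', hu', hg⟩
    refine ⟨u, hu, u', hu', ?_⟩
    simp only [mul_inv_rev, map_mul, hγ]
    rw [show g⁻¹ * γ⁻¹ * (γ * F g) = g⁻¹ * F g by group, hg]
end

section
/- Let G be a group, F : G → G a group homomorphism, U a subgroup of G, and define L : G → G by L(g) = g⁻¹F(g). Let x ∈ G and suppose λ ∈ G satisfies L(λ) = x. Then the map g ↦ gλ⁻¹ is a bijection from L⁻¹(xU) onto L⁻¹(F(λ)UF(λ)⁻¹), and it commutes with left multiplication by elements of G^F = {g ∈ G : F(g) = g}. -/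
theorem stmt9 (G : Type*) [Group G] (F : G →* G) (U : Subgroup G)
    (x : G) (lam : G) (hlam : lam⁻¹ * F lam = x)
    -- `A = L⁻¹(xU)`
    (A : Set G) (hA : A = {g : G | ∃ u ∈ U, g⁻¹ * F g = x * u})
    -- `B = L⁻¹(F(λ) U F(λ)⁻¹)`
    (B : Set G) (hB : B = {g : G | ∃ u ∈ U, g⁻¹ * F g = F lam * u * (F lam)⁻¹}) :
    Set.BijOn (fun g => g * lam⁻¹) A B ∧
    -- the map commutes with left multiplication by elements of `G^F`
    (∀ γ : G, F γ = γ → ∀ g : G, (γ * g) * lam⁻¹ = γ * (g * lam⁻¹)) ∧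
    (∀ γ : G, F γ = γ → ∀ g ∈ A, γ * g ∈ A) ∧
    (∀ γ : G, F γ = γ → ∀ g ∈ B, γ * g ∈ B) := by
  subst hlam hA hB
  refine ⟨⟨?_, ?_, ?_⟩, ?_, ?_, ?_⟩
  · rintro g ⟨u, hu, hg⟩
    refine ⟨u, hu, ?_⟩
    simp only [map_mul, map_inv]
    calc (g * lam⁻¹)⁻¹ * (F g * (F lam)⁻¹)
        = lam * (g⁻¹ * F g) * (F lam)⁻¹ := by group
      _ = lam * (lam⁻¹ * F lam * u) * (F lam)⁻¹ := by rw [hg]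
      _ = F lam * u * (F lam)⁻¹ := by group
  · intro a _ b _ h
    simpa using mul_right_cancel (b := lam⁻¹) h
  · rintro h ⟨u, hu, hh⟩
    refine ⟨h * lam, ⟨u, hu, ?_⟩, by simp⟩
    calc (h * lam)⁻¹ * F (h * lam)
        = lam⁻¹ * (h⁻¹ * F h) * F lam := by simp [map_mul]; group
      _ = lam⁻¹ * (F lam * u * (F lam)⁻¹) * F lam := by rw [hh]
      _ = lam⁻¹ * F lam * u := by group
  · intro γ _ g; group
  · rintro γ hγ g ⟨u, hu, hg⟩
    refine ⟨u, hu, ?_⟩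
    calc (γ * g)⁻¹ * F (γ * g) = g⁻¹ * (γ⁻¹ * F γ) * F g := by simp [map_mul]; group
      _ = g⁻¹ * F g := by rw [hγ]; group
      _ = lam⁻¹ * F lam * u := hg
  · rintro γ hγ g ⟨u, hu, hg⟩
    refine ⟨u, hu, ?_⟩
    calc (γ * g)⁻¹ * F (γ * g) = g⁻¹ * (γ⁻¹ * F γ) * F g := by simp [map_mul]; group
      _ = g⁻¹ * F g := by rw [hγ]; group
      _ = F lam * u * (F lam)⁻¹ := hg
end

section
/- Let G be a group, F : G → G a group homomorphism, and H a subgroup of G with F(H) ⊆ H. Assume the Lang map is surjective on H, i.e., for every h ∈ H there exists s ∈ H with h = s⁻¹F(s). Let G^F = {g ∈ G : F(g) = g} and H^F = H ∩ G^F. Then the map sending the coset xH^F (for x ∈ G^F) to the coset xH is a well-defined bijection from G^F/H^F onto {gH ∈ G/H : g⁻¹F(g) ∈ H}, and it commutes with the actions of G^F by left multiplication on both sides. -/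
theorem stmt13 (G : Type*) [Group G] (F : G →* G) (H : Subgroup G)
    (hFH : ∀ h ∈ H, F h ∈ H)
    -- the Lang map is surjective on `H`
    (hLang : ∀ h ∈ H, ∃ s ∈ H, h = s⁻¹ * F s) :
    -- the map `x H^F ↦ x H` from `G^F/H^F` to `{gH : g⁻¹F(g) ∈ H}`:
    -- it lands in the target,
    (∀ x : G, F x = x → x⁻¹ * F x ∈ H) ∧
    -- it is well defined and injective: `x, y ∈ G^F` have the same image iff they
    -- lie in the same left coset of `H^F = H ∩ G^F`,
    (∀ x y : G, F x = x → F y = y →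
      ((QuotientGroup.mk x : G ⧸ H) = QuotientGroup.mk y ↔
        ∃ h ∈ H, F h = h ∧ y = x * h)) ∧
    -- it is surjective onto `{gH ∈ G/H : g⁻¹F(g) ∈ H}`,
    (∀ g : G, g⁻¹ * F g ∈ H →
      ∃ x : G, F x = x ∧ (QuotientGroup.mk x : G ⧸ H) = QuotientGroup.mk g) ∧
    -- and it commutes with the actions of `G^F` by left multiplication on both sides
    (∀ γ x : G, F γ = γ → (QuotientGroup.mk (γ * x) : G ⧸ H) = γ • QuotientGroup.mk x) := by
  refine ⟨fun x hx => by simp [hx, H.one_mem], fun x y hx hy => ?_, fun g hg => ?_, fun γ x hγ => rfl⟩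
  · rw [QuotientGroup.eq]
    constructor
    · intro h
      exact ⟨x⁻¹ * y, h, by simp [hx, hy], by group⟩
    · rintro ⟨h, hH, -, rfl⟩
      simpa using hH
  · obtain ⟨s, hs, heq⟩ := hLang _ hg
    refine ⟨g * s⁻¹, ?_, ?_⟩
    · have : F g = g * (s⁻¹ * F s) := by rw [← heq]; group
      rw [map_mul, map_inv, this]; group
    · rw [QuotientGroup.eq]
      simpa using hs
end

section
/- With the action of G = SL₂(R) on X̄ = {(a₀,c₀) ∈ 𝔽_q² : (a₀,c₀) ≠ (0,0)} × 𝔽_q given by g · ((a₀, c₀), t) = ((x₀a₀ + y₀c₀, z₀a₀ + w₀c₀), t + a₀²(x₀z₁ − z₀x₁) + a₀c₀(x₀w₁ + y₀z₁ − z₀y₁ − w₀x₁) + c₀²(y₀w₁ − w₀y₁)) for g = (x₀+x₁ε, y₀+y₁ε; z₀+z₁ε, w₀+w₁ε), the setwise stabilizer in G of the block B = {((a₀, c₀), t) ∈ X̄ : (a₀, c₀) = (1, 0) or (a₀, c₀) = (−1, 0)} equals H = {g ∈ SL₂(R) : ρ(g) = ±(1, y; 0, 1) for some y ∈ 𝔽_q}.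 -/
open Matrix TrivSqZeroExt

theorem stmt15 (F : Type) [Field F] [Fintype F] (p n : ℕ) (hp : p.Prime) (hodd : p ≠ 2)
    (hn : n ≠ 0) (hcard : Fintype.card F = p ^ n)
    -- the action of `G` on `X̄ ⊆ (F × F) × F`, given in coordinates;
    -- for `g = (x₀+x₁ε, y₀+y₁ε; z₀+z₁ε, w₀+w₁ε)`
    (act : Matrix.SpecialLinearGroup (Fin 2) (DualNumber F) → (F × F) × F → (F × F) × F)
    (hact : ∀ g v, act g v =
      ((((g.val 0 0).fst) * v.1.1 + ((g.val 0 1).fst) * v.1.2,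
        ((g.val 1 0).fst) * v.1.1 + ((g.val 1 1).fst) * v.1.2),
       v.2 + v.1.1 ^ 2 * ((g.val 0 0).fst * (g.val 1 0).snd
              - (g.val 1 0).fst * (g.val 0 0).snd)
           + v.1.1 * v.1.2 * ((g.val 0 0).fst * (g.val 1 1).snd
              + (g.val 0 1).fst * (g.val 1 0).snd
              - (g.val 1 0).fst * (g.val 0 1).snd
              - (g.val 1 1).fst * (g.val 0 0).snd)
           + v.1.2 ^ 2 * ((g.val 0 1).fst * (g.val 1 1).snd
              - (g.val 1 1).fst * (g.val 0 1).snd)))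
    -- the block `B = {((±1, 0), t)}`
    (B : Set ((F × F) × F)) (hB : B = {v | v.1 = (1, 0) ∨ v.1 = (-1, 0)}) :
    -- the setwise stabilizer of `B` equals `H = ρ⁻¹({±(1, y; 0, 1)})`
    {g : Matrix.SpecialLinearGroup (Fin 2) (DualNumber F) | act g '' B = B} =
      {g | ∃ y : F, (rho F g).val = !![1, y; 0, 1] ∨ (rho F g).val = -!![1, y; 0, 1]} := by
  ext g
  have hval : (rho F g).val = Matrix.of (fun i j => (g.val i j).fst) := rfl
  have hdet : (g.val 0 0).fst * (g.val 1 1).fst - (g.val 0 1).fst * (g.val 1 0).fst = 1 := by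
    have h2 := g.2
    rw [Matrix.det_fin_two] at h2
    simpa using congrArg TrivSqZeroExt.fst h2
  simp only [Set.mem_setOf_eq]
  constructor
  · intro h
    have hmem : (((1:F),(0:F)),(0:F)) ∈ B := by rw [hB]; left; rfl
    have h1 : act g (((1:F),(0:F)),(0:F)) ∈ B := h ▸ Set.mem_image_of_mem _ hmem
    rw [hact, hB] at h1
    simp only [Set.mem_setOf_eq, Prod.mk.injEq, mul_one, mul_zero, add_zero] at h1
    rcases h1 with ⟨ha, hc⟩ | ⟨ha, hc⟩
    · have hd : (g.val 1 1).fst = 1 := by rw [ha, hc] at hdet; simpa using hdet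
      refine ⟨(g.val 0 1).fst, Or.inl ?_⟩
      rw [hval]
      ext i j
      fin_cases i <;> fin_cases j <;> simp [ha, hc, hd]
    · have hd : (g.val 1 1).fst = -1 := by
        rw [ha, hc] at hdet
        linear_combination (-1 : F) * hdet
      refine ⟨-(g.val 0 1).fst, Or.inr ?_⟩
      rw [hval]
      ext i j
      fin_cases i <;> fin_cases j <;> simp [ha, hc, hd]
  · rintro ⟨y, hy⟩
    rw [hval] at hy
    have ha : (g.val 0 0).fst = 1 ∨ (g.val 0 0).fst = -1 := by
      rcases hy with hy | hy
      · left; simpa using congrFun (congrFun hy 0) 0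
      · right; simpa using congrFun (congrFun hy 0) 0
    have hc : (g.val 1 0).fst = 0 := by
      rcases hy with hy | hy
      · simpa using congrFun (congrFun hy 1) 0
      · simpa using congrFun (congrFun hy 1) 0
    ext w
    constructor
    · rintro ⟨v, hv, rfl⟩
      obtain ⟨⟨v1, v2⟩, t⟩ := v
      rw [hB] at hv ⊢
      simp only [Set.mem_setOf_eq, Prod.mk.injEq] at hv ⊢
      rw [hact]
      rcases hv with ⟨h1, h2⟩ | ⟨h1, h2⟩ <;> rcases ha with hA | hA <;>
        simp [h1, h2, hc, hA]
    · intro hw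
      obtain ⟨⟨w1, w2⟩, t⟩ := w
      rw [hB] at hw
      simp only [Set.mem_setOf_eq, Prod.mk.injEq] at hw
      refine ⟨(((g.val 0 0).fst * w1, 0), t - (g.val 0 0).fst * (g.val 1 0).snd), ?_, ?_⟩
      · rw [hB]
        simp only [Set.mem_setOf_eq, Prod.mk.injEq]
        rcases hw with ⟨h1, h2⟩ | ⟨h1, h2⟩ <;> rcases ha with hA | hA <;> simp [h1, hA]
      · rw [hact]
        rcases hw with ⟨h1, h2⟩ | ⟨h1, h2⟩ <;> rcases ha with hA | hA <;>
          simp [h1, h2, hc, hA, Prod.ext_iff] <;> ring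
end

section
/- For k ∈ Kˣ and t₀ ∈ 𝔽_qˣ, the map g ↦ g · diag(t₀, t₀⁻¹) is a bijection from L⁻¹((1, 0; kε, 1)U₂) onto L⁻¹((1, 0; t₀²kε, 1)U₂), and it commutes with left multiplication by elements of SL₂(R)^F = {g ∈ SL₂(R) : F(g) = g}. -/
open Matrix TrivSqZeroExt

lemma conj_aux {K : Type*} [Field K] (a b : K) (hab : a * b = 1)
    (m : K) (u : DualNumber K) :
    !![inl b, 0; 0, inl a] *
        (!![(1 : DualNumber K), 0; inl m * DualNumber.eps, 1] * !![1, u; 0, 1]) *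
      !![inl a, 0; 0, inl b]
    = !![1, 0; inl (a ^ 2 * m) * DualNumber.eps, 1] * !![1, inl (b ^ 2) * u; 0, 1] := by
  have hab' : (inl a : DualNumber K) * inl b = 1 := by
    rw [← inl_mul, hab, inl_one]
  have ha2 : (inl (a ^ 2) : DualNumber K) = inl a * inl a := by rw [sq, inl_mul]
  have hb2 : (inl (b ^ 2) : DualNumber K) = inl b * inl b := by rw [sq, inl_mul]
  apply Matrix.ext
  intro i j
  fin_cases i <;> fin_cases j
  · simp [Matrix.mul_apply, Fin.sum_univ_two, ha2, hb2]
    linear_combination hab'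
  · simp [Matrix.mul_apply, Fin.sum_univ_two, ha2, hb2]
    try ring
  · simp [Matrix.mul_apply, Fin.sum_univ_two, ha2, hb2]
    try ring
  · simp [Matrix.mul_apply, Fin.sum_univ_two, ha2, hb2]
    linear_combination (1 - inl a * inl b * (inl m * DualNumber.eps * u)) * hab'

theorem stmt17 (F : Type) [Field F] [Fintype F] (q : ℕ) (hq : q = Fintype.card F)
    -- `φ` is the ring endomorphism of `R = K[X]/(X²)` raising coefficients to the `q`-th power
    (φ : DualNumber (AlgebraicClosure F) →+* DualNumber (AlgebraicClosure F))
    (hφ : ∀ x : DualNumber (AlgebraicClosure F),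
      (φ x).fst = x.fst ^ q ∧ (φ x).snd = x.snd ^ q)
    (k : AlgebraicClosure F) (hk : k ≠ 0)
    -- `t₀ ∈ 𝔽_qˣ`, viewed inside `K`
    (t₀ : AlgebraicClosure F) (ht₀ : t₀ ≠ 0) (ht₀q : t₀ ^ q = t₀)
    -- for `m ∈ Kˣ`, `A m = L⁻¹((1, 0; mε, 1)U₂)`
    (A : AlgebraicClosure F → Set (Matrix.SpecialLinearGroup (Fin 2)
        (DualNumber (AlgebraicClosure F))))
    (hA : ∀ m, A m = {g | ∃ u : DualNumber (AlgebraicClosure F),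
        ((g⁻¹ * Matrix.SpecialLinearGroup.map φ g).val) =
          !![1, 0; inl m * DualNumber.eps, 1] * !![1, u; 0, 1]})
    -- `d = diag(t₀, t₀⁻¹)`
    (d : Matrix.SpecialLinearGroup (Fin 2) (DualNumber (AlgebraicClosure F)))
    (hd : d.val = !![inl t₀, 0; 0, inl t₀⁻¹]) :
    -- `g ↦ g·d` is a bijection from `L⁻¹((1, 0; kε, 1)U₂)` onto `L⁻¹((1, 0; t₀²kε, 1)U₂)`
    Set.BijOn (fun g => g * d) (A k) (A (t₀ ^ 2 * k)) ∧
    -- commuting with left multiplication by elements of `SL₂(R)^F`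
    (∀ γ : Matrix.SpecialLinearGroup (Fin 2) (DualNumber (AlgebraicClosure F)),
      Matrix.SpecialLinearGroup.map φ γ = γ →
        (∀ g, (γ * g) * d = γ * (g * d)) ∧
        (∀ g ∈ A k, γ * g ∈ A k) ∧
        (∀ g ∈ A (t₀ ^ 2 * k), γ * g ∈ A (t₀ ^ 2 * k))) := by
  have hq0 : q ≠ 0 := by
    rw [hq]; exact Fintype.card_ne_zero
  have hφinl : ∀ x : AlgebraicClosure F, x ^ q = x → φ (inl x) = inl x := by
    intro x hx
    obtain ⟨h1, h2⟩ := hφ (inl x)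
    ext
    · simpa [h1] using hx
    · rw [h2, snd_inl]
      exact zero_pow hq0
  have ht₀q' : (t₀⁻¹) ^ q = t₀⁻¹ := by rw [inv_pow, ht₀q]
  -- F(d) = d
  have hFd : Matrix.SpecialLinearGroup.map φ d = d := by
    apply Subtype.ext
    rw [Matrix.SpecialLinearGroup.map_apply_coe, hd]
    apply Matrix.ext
    intro i j
    fin_cases i <;> fin_cases j <;>
      simp [RingHom.mapMatrix_apply, hφinl t₀ ht₀q, hφinl t₀⁻¹ ht₀q']
  have hdinv : (d⁻¹).val = !![inl t₀⁻¹, 0; 0, inl t₀] := by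
    rw [Matrix.SpecialLinearGroup.coe_inv, hd, Matrix.adjugate_fin_two]
    norm_num
  have hab : t₀ * t₀⁻¹ = 1 := mul_inv_cancel₀ ht₀
  have hba : t₀⁻¹ * t₀ = 1 := inv_mul_cancel₀ ht₀
  -- L(g*d) = d⁻¹ L(g) d at the matrix level
  have hLgd : ∀ g : Matrix.SpecialLinearGroup (Fin 2) (DualNumber (AlgebraicClosure F)),
      ((g * d)⁻¹ * Matrix.SpecialLinearGroup.map φ (g * d)).val
        = (d⁻¹).val * ((g⁻¹ * Matrix.SpecialLinearGroup.map φ g).val) * d.val := by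
    intro g
    rw [_root_.map_mul, hFd, _root_.mul_inv_rev]
    simp only [Matrix.SpecialLinearGroup.coe_mul, Matrix.mul_assoc]
  -- key iff
  have key : ∀ g, g ∈ A k ↔ g * d ∈ A (t₀ ^ 2 * k) := by
    intro g
    rw [hA, hA]
    constructor
    · rintro ⟨u, hu⟩
      exact ⟨inl (t₀⁻¹ ^ 2) * u, by
        rw [hLgd, hu, hd, hdinv]; exact conj_aux t₀ t₀⁻¹ hab k u⟩
    · rintro ⟨u, hu⟩
      refine ⟨inl (t₀ ^ 2) * u, ?_⟩
      have h3 : d.val * (d⁻¹).val = 1 := by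
        rw [← Matrix.SpecialLinearGroup.coe_mul, mul_inv_cancel,
          Matrix.SpecialLinearGroup.coe_one]
      have h2 : d.val * (((g * d)⁻¹ * Matrix.SpecialLinearGroup.map φ (g * d)).val) * (d⁻¹).val
          = ((g⁻¹ * Matrix.SpecialLinearGroup.map φ g).val) := by
        rw [hLgd g]
        simp only [← Matrix.mul_assoc]
        rw [h3, Matrix.one_mul, Matrix.mul_assoc, h3, Matrix.mul_one]
      rw [← h2, hu, hd, hdinv]
      have := conj_aux t₀⁻¹ t₀ hba (t₀ ^ 2 * k) u
      rw [show t₀⁻¹ ^ 2 * (t₀ ^ 2 * k) = k by field_simp] at this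
      exact this
  -- invariance of A m under left mult by F-fixed γ
  have hinv : ∀ m, ∀ γ : Matrix.SpecialLinearGroup (Fin 2) (DualNumber (AlgebraicClosure F)),
      Matrix.SpecialLinearGroup.map φ γ = γ → ∀ g ∈ A m, γ * g ∈ A m := by
    intro m γ hγ g hg
    rw [hA] at hg ⊢
    obtain ⟨u, hu⟩ := hg
    refine ⟨u, ?_⟩
    rw [_root_.map_mul, hγ, _root_.mul_inv_rev, mul_assoc, inv_mul_cancel_left, hu]
  refine ⟨⟨fun g hg => (key g).mp hg,
    fun g₁ _ g₂ _ h => by simpa using mul_right_cancel (a := g₁) (b := d) (c := g₂) h,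
    fun h hh => ⟨h * d⁻¹, ?_, by simp⟩⟩,
    fun γ hγ => ⟨fun g => mul_assoc γ g d, hinv k γ hγ, hinv (t₀ ^ 2 * k) γ hγ⟩⟩
  rw [key (h * d⁻¹)]
  simpa using hh
end

section
/- Let k ∈ Kˣ and g = (a, b; c, d) ∈ SL₂(R). Then g⁻¹F(g) ∈ (1, 0; kε, 1)U₂ if and only if the following three conditions hold: φ(a) = a + bkε, φ(c) = c + dkε, and (φ(b) − b)(c + dkε) = (φ(d) − d)(a + bkε). -/
open Matrix TrivSqZeroExt

set_option maxHeartbeats 2000000 in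
theorem stmt18 (F : Type) [Field F] [Fintype F] (q : ℕ) (hq : q = Fintype.card F)
    -- `φ` is the ring endomorphism of `R = K[X]/(X²)` raising coefficients to the `q`-th power
    (φ : DualNumber (AlgebraicClosure F) →+* DualNumber (AlgebraicClosure F))
    (hφ : ∀ x : DualNumber (AlgebraicClosure F),
      (φ x).fst = x.fst ^ q ∧ (φ x).snd = x.snd ^ q)
    (k : AlgebraicClosure F) (hk : k ≠ 0)
    (g : Matrix.SpecialLinearGroup (Fin 2) (DualNumber (AlgebraicClosure F)))
    (a b c d : DualNumber (AlgebraicClosure F))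
    (hg : g.val = !![a, b; c, d]) :
    -- `g⁻¹ F(g) ∈ (1, 0; kε, 1)U₂` iff the three equations hold
    (∃ u : DualNumber (AlgebraicClosure F),
      ((g⁻¹ * Matrix.SpecialLinearGroup.map φ g).val) =
        !![1, 0; inl k * DualNumber.eps, 1] * !![1, u; 0, 1]) ↔
      (φ a = a + b * inl k * DualNumber.eps ∧
       φ c = c + d * inl k * DualNumber.eps ∧
       (φ b - b) * (c + d * inl k * DualNumber.eps) =
         (φ d - d) * (a + b * inl k * DualNumber.eps)) := by
  have hdet : a * d - b * c = 1 := by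
    have := g.prop
    rw [hg, Matrix.det_fin_two_of] at this
    exact this
  have hmap : (Matrix.SpecialLinearGroup.map φ g).val = !![φ a, φ b; φ c, φ d] := by
    rw [Matrix.SpecialLinearGroup.map_apply_coe, hg]
    exact Matrix.ext fun i j => by fin_cases i <;> fin_cases j <;> rfl
  have hdet' : φ a * φ d - φ b * φ c = 1 := by
    have := (Matrix.SpecialLinearGroup.map φ g).prop
    rw [hmap, Matrix.det_fin_two_of] at this
    exact this
  have hLHS : (g⁻¹ * Matrix.SpecialLinearGroup.map φ g).val =
      !![d * φ a + -b * φ c, d * φ b + -b * φ d;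
         -c * φ a + a * φ c, -c * φ b + a * φ d] := by
    rw [Matrix.SpecialLinearGroup.coe_mul, Matrix.SpecialLinearGroup.coe_inv, hg, hmap,
      Matrix.adjugate_fin_two_of, Matrix.mul_fin_two]
  have hRHS : ∀ u : DualNumber (AlgebraicClosure F),
      (!![1, 0; inl k * DualNumber.eps, 1] * !![1, u; 0, 1] :
        Matrix (Fin 2) (Fin 2) (DualNumber (AlgebraicClosure F))) =
      !![1, u; inl k * DualNumber.eps, inl k * DualNumber.eps * u + 1] := by
    intro u
    rw [Matrix.mul_fin_two]
    simp only [one_mul, mul_one, mul_zero, zero_mul, add_zero, zero_add]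
  constructor
  · rintro ⟨u, hu⟩
    rw [hLHS, hRHS] at hu
    have h11 := congrFun (congrFun hu 0) 0
    have h21 := congrFun (congrFun hu 1) 0
    simp at h11 h21
    have e1 : φ a = a + b * inl k * DualNumber.eps := by
      linear_combination a * h11 + b * h21 - φ a * hdet
    have e2 : φ c = c + d * inl k * DualNumber.eps := by
      linear_combination c * h11 + d * h21 - φ c * hdet
    refine ⟨e1, e2, ?_⟩
    rw [← e1, ← e2]
    linear_combination h11 - hdet'
  · rintro ⟨e1, e2, -⟩
    refine ⟨d * φ b + -b * φ d, ?_⟩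
    have f11 : d * φ a + -b * φ c = 1 := by
      linear_combination d * e1 - b * e2 + hdet
    have f21 : -c * φ a + a * φ c = inl k * DualNumber.eps := by
      linear_combination a * e2 - c * e1 + (inl k * DualNumber.eps) * hdet
    have f22 : -c * φ b + a * φ d =
        inl k * DualNumber.eps * (d * φ b + -b * φ d) + 1 := by
      linear_combination -φ d * e1 + φ b * e2 + hdet'
    rw [hLHS, hRHS, f11, f21, f22]
end
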